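/- For e₂ > e₁ in [0,1) and β ∈ (0,9], the modified quadratic forms Γ̃(β,e)(x) = ∫_{-π}^{π}[|x'|² - |x|² + ⟨f_{β,e}(t)x,x⟩]dt, where f_{β,e}(t) = (3I₂+√(9-β)S(t))/(2(1+e cos t)) when cos t ≤ 0 and f_{β,e}(t) = (3I₂+√(9-β)S(t))/(2(1+cos t)) when cos t > 0, satisfy Γ̃(β,e₂)(x) ≥ Γ̃(β,e₁)(x) for all x ∈ W^{1,2}. -/
import Mathlib


open Matrix Real MeasureTheory

/-- The symmetric matrix S(t). -/
noncomputable def Smat (t : ℝ) : Matrix (Fin 2) (Fin 2) ℝ :=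
  !![cos (2 * t), sin (2 * t); sin (2 * t), -cos (2 * t)]

/-- The truncated coefficient matrix f_{β,e}(t). -/
noncomputable def ftrunc (β e t : ℝ) : Matrix (Fin 2) (Fin 2) ℝ :=
  if cos t ≤ 0 then
    (2 * (1 + e * cos t))⁻¹ • ((3 : ℝ) • (1 : Matrix (Fin 2) (Fin 2) ℝ) + Real.sqrt (9 - β) • Smat t)
  else
    (2 * (1 + cos t))⁻¹ • ((3 : ℝ) • (1 : Matrix (Fin 2) (Fin 2) ℝ) + Real.sqrt (9 - β) • Smat t)

/-- The modified quadratic form Γ̃(β,e)(x). -/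
noncomputable def GammaTilde (β e : ℝ) (x : ℝ → Fin 2 → ℝ) : ℝ :=
  ∫ t in (-Real.pi)..Real.pi,
    (‖deriv x t‖ ^ 2 - ‖x t‖ ^ 2 + ((ftrunc β e t).mulVec (x t)) ⬝ᵥ (x t))

lemma quad_core (c s a b : ℝ) (h : s ^ 2 + c ^ 2 = 1) :
    -(a ^ 2 + b ^ 2) ≤ c * (a ^ 2 - b ^ 2) + 2 * s * a * b := by
  nlinarith [sq_nonneg (s * a + (1 - c) * b), sq_nonneg (s * b + (1 + c) * a),
    sq_nonneg (a + b), sq_nonneg (a - b)]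

lemma base_nonneg (β t : ℝ) (hβ0 : 0 < β) (v : Fin 2 → ℝ) :
    0 ≤ ((((3 : ℝ) • (1 : Matrix (Fin 2) (Fin 2) ℝ) + Real.sqrt (9 - β) • Smat t)).mulVec v) ⬝ᵥ v := by
  set k := Real.sqrt (9 - β) with hk
  have hk0 : 0 ≤ k := Real.sqrt_nonneg _
  have hk3 : k ≤ 3 := by
    rw [hk, show (3:ℝ) = Real.sqrt 9 by
      rw [show (9:ℝ) = 3^2 by norm_num, Real.sqrt_sq]; norm_num]
    exact Real.sqrt_le_sqrt (by linarith)
  have hQ := quad_core (cos (2*t)) (sin (2*t)) (v 0) (v 1) (sin_sq_add_cos_sq (2*t))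
  simp [Smat, mulVec, dotProduct, Fin.sum_univ_two, Matrix.one_apply, Matrix.add_apply,
    Matrix.smul_apply]
  nlinarith [sq_nonneg (v 0), sq_nonneg (v 1)]

lemma ftrunc_mono (β e₁ e₂ t : ℝ) (hβ0 : 0 < β)
    (he0 : 0 ≤ e₁) (he12 : e₁ < e₂) (he1 : e₂ < 1) (v : Fin 2 → ℝ) :
    ((ftrunc β e₁ t).mulVec v) ⬝ᵥ v ≤ ((ftrunc β e₂ t).mulVec v) ⬝ᵥ v := by
  unfold ftrunc
  by_cases hc : cos t ≤ 0
  · simp only [hc, if_true]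
    rw [Matrix.smul_mulVec, Matrix.smul_mulVec, smul_dotProduct,
      smul_dotProduct, smul_eq_mul, smul_eq_mul]
    have hN := base_nonneg β t hβ0 v
    have hcos : -1 ≤ cos t := neg_one_le_cos t
    have h2 : (0:ℝ) < 2 * (1 + e₂ * cos t) := by nlinarith
    have h1le : 2 * (1 + e₂ * cos t) ≤ 2 * (1 + e₁ * cos t) := by nlinarith
    have hinv : (2 * (1 + e₁ * cos t))⁻¹ ≤ (2 * (1 + e₂ * cos t))⁻¹ :=
      inv_anti₀ h2 h1le
    exact mul_le_mul_of_nonneg_right hinv hN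
  · simp [hc]

/-- Monotonicity in e of the modified quadratic forms: Γ̃(β,e₂) ≥ Γ̃(β,e₁) for e₂ > e₁. -/
theorem gammaTilde_monotone (β e₁ e₂ : ℝ) (hβ0 : 0 < β) (hβ9 : β ≤ 9)
    (he0 : 0 ≤ e₁) (he12 : e₁ < e₂) (he1 : e₂ < 1) (x : ℝ → Fin 2 → ℝ)
    (hi1 : IntervalIntegrable
      (fun t => ‖deriv x t‖ ^ 2 - ‖x t‖ ^ 2 + ((ftrunc β e₁ t).mulVec (x t)) ⬝ᵥ (x t))
      volume (-Real.pi) Real.pi)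
    (hi2 : IntervalIntegrable
      (fun t => ‖deriv x t‖ ^ 2 - ‖x t‖ ^ 2 + ((ftrunc β e₂ t).mulVec (x t)) ⬝ᵥ (x t))
      volume (-Real.pi) Real.pi) :
    GammaTilde β e₁ x ≤ GammaTilde β e₂ x := by
  unfold GammaTilde
  apply intervalIntegral.integral_mono_on (by linarith [Real.pi_pos]) hi1 hi2
  intro t _
  have := ftrunc_mono β e₁ e₂ t hβ0 he0 he12 he1 (x t)
  linarith
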